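/- arXiv:2603.28247 — 6 statements merged into one kernel-verified Lean document; each statement's English description precedes it below -/
import Mathlib

section
/- Let G be a simple connected graph with closed neighborhood ideal N_G in the polynomial ring S over a field K with one variable t_v for each vertex v, and let U, D ⊆ V(G) be sets of vertices such that the colon ideal (N_G : t_U) equals the prime ideal ⟨D⟩ generated by the variables indexed by D, where t_U = ∏_{v∈U} t_v. Then U ∩ D = ∅, and for every w ∈ D there exists a vertex v with N[v] ⊆ U ∪ {w} and N[v] ⊄ U. -/
open Finset MvPolynomial

noncomputable section
open scoped Classical

variable {V : Type*}

/-- The closed neighborhood of a vertex, as a finite set. -/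
def closedNbhd [Fintype V] (G : SimpleGraph V) (v : V) : Finset V :=
  Finset.univ.filter fun u => u = v ∨ G.Adj v u

/-- The closed neighborhood of a set of vertices. -/
def closedNbhdSet [Fintype V] (G : SimpleGraph V) (A : Finset V) : Finset V :=
  A.biUnion (closedNbhd G)

/-- A dominating set of a graph. -/
def IsDominatingSet [Fintype V] (G : SimpleGraph V) (D : Finset V) : Prop :=
  ∀ v : V, ∃ u ∈ D, v ∈ closedNbhd G u

/-- A minimal dominating set: dominating, and no proper subset dominates. -/
def IsMinimalDominatingSet [Fintype V] (G : SimpleGraph V) (D : Finset V) : Prop :=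
  IsDominatingSet G D ∧ ∀ D' ⊂ D, ¬ IsDominatingSet G D'

/-- The set of external and self-private neighbors of D: the vertices whose
closed neighborhood meets D in exactly one vertex. -/
def privateNbrs [Fintype V] (G : SimpleGraph V) (D : Finset V) : Finset V :=
  Finset.univ.filter fun v => (closedNbhd G v ∩ D).card = 1

/-- The closed neighborhood ideal of a graph, in the polynomial ring over K with
one variable for each vertex. -/
def cnIdeal (K : Type*) [Field K] [Fintype V] (G : SimpleGraph V) :
    Ideal (MvPolynomial V K) :=
  Ideal.span (Set.range fun v => ∏ u ∈ closedNbhd G v, X u)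

/-- The ideal generated by the variables indexed by a set of vertices D. -/
def vertexIdeal (K : Type*) [Field K] (D : Finset V) : Ideal (MvPolynomial V K) :=
  Ideal.span ((fun v => (X v : MvPolynomial V K)) '' ↑D)

/-- The v-number of a graded ideal: the least degree d of a homogeneous polynomial f
such that the colon ideal (I : f) is an associated prime of S/I. -/
def vNumber {K : Type*} [Field K] (I : Ideal (MvPolynomial V K)) : ℕ :=
  sInf {d : ℕ | ∃ f : MvPolynomial V K, f.IsHomogeneous d ∧
    Submodule.colon I (Ideal.span {f}) ∈
      associatedPrimes (MvPolynomial V K) (MvPolynomial V K ⧸ I)}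

end

/-! A product of variables, repetitions allowed, lies in the ideal generated by the squarefree
monomials `t_A` exactly when its set of variables contains some `A`. Since `⟨D⟩` is proper,
`t_U ∉ N_G`, so no `N[v]` lies in `U`; since `t_w ∈ ⟨D⟩ = (N_G : t_U)` for `w ∈ D`, some `N[v]`
lies in `U ∪ {w}`, which for `w ∈ U` would be `U` itself. -/

namespace MvPolynomial

variable {σ R : Type*} [CommSemiring R]

theorem span_X_image_ne_top [Nontrivial R] (s : Set σ) :
    Ideal.span (X '' s : Set (MvPolynomial σ R)) ≠ ⊤ := by
  rw [Ne, Ideal.eq_top_iff_one, mem_ideal_span_X_image]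
  simp

section
variable [DecidableEq σ]

theorem multiset_prod_X_eq_monomial (s : Multiset σ) :
    (s.map X).prod = (monomial (Multiset.toFinsupp s) 1 : MvPolynomial σ R) := by
  induction s using Multiset.induction_on with
  | empty => simp
  | cons a s ih =>
    rw [Multiset.map_cons, Multiset.prod_cons, ih, ← Multiset.singleton_add,
      Multiset.toFinsupp_add, Multiset.toFinsupp_singleton, monomial_single_add, pow_one]

theorem multiset_prod_X_mem_span_prod_X_iff [Nontrivial R] {ι : Type*} (A : ι → Finset σ)
    (s : Multiset σ) :
    (s.map X).prod ∈ Ideal.span (Set.range fun i => ∏ u ∈ A i, (X u : MvPolynomial σ R)) ↔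
      ∃ i, A i ⊆ s.toFinset := by
  classical
  have generators_eq : (Set.range fun i => ∏ u ∈ A i, (X u : MvPolynomial σ R)) =
      (fun e => monomial e 1) '' Set.range fun i => Multiset.toFinsupp (A i).val := by
    rw [← Set.range_comp]
    congr 1
    funext i
    exact multiset_prod_X_eq_monomial (A i).val
  have toFinsupp_le_iff (t : Finset σ) :
      Multiset.toFinsupp t.val ≤ Multiset.toFinsupp s ↔ t ⊆ s.toFinset := by
    rw [← Finsupp.coe_orderIsoMultiset_symm, OrderIso.le_iff_le, Finset.val_le_iff_val_subset]
    simp [Finset.subset_iff, Multiset.subset_iff]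
  rw [generators_eq, multiset_prod_X_eq_monomial, mem_ideal_span_monomial_image,
    support_monomial, if_neg one_ne_zero]
  simp [toFinsupp_le_iff]

theorem prod_X_mem_span_prod_X_iff [Nontrivial R] {ι : Type*} (A : ι → Finset σ)
    (s : Finset σ) :
    ∏ u ∈ s, (X u : MvPolynomial σ R) ∈ Ideal.span (Set.range fun i => ∏ u ∈ A i, X u) ↔
      ∃ i, A i ⊆ s := by
  simpa using multiset_prod_X_mem_span_prod_X_iff (R := R) A s.val

theorem X_mul_prod_X_mem_span_prod_X_iff [Nontrivial R] {ι : Type*} (A : ι → Finset σ)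
    (w : σ) (s : Finset σ) :
    X w * ∏ u ∈ s, (X u : MvPolynomial σ R) ∈ Ideal.span (Set.range fun i => ∏ u ∈ A i, X u) ↔
      ∃ i, A i ⊆ insert w s := by
  simpa using multiset_prod_X_mem_span_prod_X_iff (R := R) A (w ::ₘ s.val)

end

end MvPolynomial

theorem colon_eq_vertexIdeal_inter_empty_general {V : Type*} [Fintype V] [DecidableEq V]
    (K : Type*) [Field K] (G : SimpleGraph V) (U D : Finset V)
    (h : Submodule.colon (cnIdeal K G) (Ideal.span {∏ v ∈ U, (X v : MvPolynomial V K)}) =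
      vertexIdeal K D) :
    U ∩ D = ∅ ∧
      ∀ w ∈ D, ∃ v : V, closedNbhd G v ⊆ U ∪ {w} ∧ ¬ closedNbhd G v ⊆ U := by
  have mem_vertexIdeal_iff (r : MvPolynomial V K) :
      r ∈ vertexIdeal K D ↔ r * ∏ v ∈ U, X v ∈ cnIdeal K G := by
    rw [← h, Ideal.mem_colon_span_singleton]
  have not_subset_U (v : V) : ¬ closedNbhd G v ⊆ U := fun hv ↦
    span_X_image_ne_top _ <| (Ideal.eq_top_iff_one _).2 <| (mem_vertexIdeal_iff 1).2 <| by
      rw [one_mul]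
      exact (prod_X_mem_span_prod_X_iff _ U).2 ⟨v, hv⟩
  have subset_insert (w : V) (hw : w ∈ D) : ∃ v, closedNbhd G v ⊆ insert w U :=
    (X_mul_prod_X_mem_span_prod_X_iff _ w U).1 <|
      (mem_vertexIdeal_iff (X w)).1 (Ideal.subset_span ⟨w, hw, rfl⟩)
  refine ⟨Finset.eq_empty_of_forall_notMem fun w hw ↦ ?_, fun w hw ↦ ?_⟩
  · rw [Finset.mem_inter] at hw
    obtain ⟨v, hv⟩ := subset_insert w hw.2
    exact not_subset_U v (Finset.insert_eq_of_mem hw.1 ▸ hv)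
  · obtain ⟨v, hv⟩ := subset_insert w hw
    exact ⟨v, Finset.union_singleton w U ▸ hv, not_subset_U v⟩

/-- If the colon ideal of the closed neighborhood ideal by the squarefree monomial
supported on U equals the ideal of variables indexed by D, then U ∩ D = ∅, and every
w ∈ D admits a vertex v with N[v] ⊆ U ∪ {w} and N[v] ⊄ U. -/
theorem colon_eq_vertexIdeal_inter_empty {V : Type*} [Fintype V] [DecidableEq V]
    (K : Type*) [Field K] (G : SimpleGraph V) (hG : G.Connected) (U D : Finset V)
    (h : Submodule.colon (cnIdeal K G) (Ideal.span {∏ v ∈ U, (X v : MvPolynomial V K)}) =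
      vertexIdeal K D) :
    U ∩ D = ∅ ∧
      ∀ w ∈ D, ∃ v : V, closedNbhd G v ⊆ U ∪ {w} ∧ ¬ closedNbhd G v ⊆ U :=
  colon_eq_vertexIdeal_inter_empty_general K G U D h
end

section
/- Let G be a simple connected graph with closed neighborhood ideal N_G. Let D be a minimal dominating set of G and let U ⊆ P_N(D) be a set of external and self-private neighbors of D that dominates D (i.e., D ⊆ N[U]). Then the colon ideal (N_G : t_{N[U]∖D}) equals the prime ideal ⟨D⟩ generated by the variables indexed by the vertices of D. -/
open Finset MvPolynomial

/-!
Substituting `0` for the variables indexed by `D` is a ring map whose kernel is `⟨D⟩`. Since `D`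
dominates, every generator `t_{N[w]}` of `N_G` contains a variable of `D`, so `N_G ⊆ ⟨D⟩`; and
`t_{N[U] \ D}` survives the substitution, so `g t_{N[U] \ D} ∈ N_G` forces `g ∈ ⟨D⟩`. Conversely,
for `d ∈ D` pick `u ∈ U` with `d ∈ N[u]`; as `u` is a private neighbour, `d` is the only vertex of
`D` in `N[u]`, so `t_{N[u]}` divides `t_d t_{N[U] \ D}`.
-/

section killVars

variable {V : Type*} [DecidableEq V] {R : Type*} [CommSemiring R]

variable (R) in
noncomputable def killVars (D : Finset V) : MvPolynomial V R →ₐ[R] MvPolynomial V R :=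
  aeval fun v => if v ∈ D then 0 else X v

@[simp]
lemma killVars_X_of_mem {D : Finset V} {v : V} (hv : v ∈ D) : killVars R D (X v) = 0 := by
  simp [killVars, hv]

@[simp]
lemma killVars_X_of_notMem {D : Finset V} {v : V} (hv : v ∉ D) : killVars R D (X v) = X v := by
  simp [killVars, hv]

lemma killVars_prod_X_of_disjoint {D s : Finset V} (h : Disjoint s D) :
    killVars R D (∏ v ∈ s, X v) = ∏ v ∈ s, X v := by
  rw [map_prod]
  exact prod_congr rfl fun v hv => killVars_X_of_notMem (disjoint_left.1 h hv)

end killVars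

section vertexIdeal

variable {V : Type*} [DecidableEq V] (K : Type*) [Field K]

lemma sub_killVars_mem_vertexIdeal (D : Finset V) (p : MvPolynomial V K) :
    p - killVars K D p ∈ vertexIdeal K D := by
  induction p using MvPolynomial.induction_on with
  | C a => simp [killVars]
  | add p q hp hq =>
    rw [map_add, add_sub_add_comm]
    exact add_mem hp hq
  | mul_X p v hp =>
    rw [map_mul]
    by_cases hv : v ∈ D
    · rw [killVars_X_of_mem hv, mul_zero, sub_zero]
      exact Ideal.mul_mem_left _ p (Ideal.subset_span ⟨v, hv, rfl⟩)
    · rw [killVars_X_of_notMem hv, ← sub_mul]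
      exact Ideal.mul_mem_right _ _ hp

lemma ker_killVars (D : Finset V) : RingHom.ker (killVars K D) = vertexIdeal K D := by
  apply le_antisymm
  · intro p hp
    simpa [RingHom.mem_ker.1 hp] using sub_killVars_mem_vertexIdeal K D p
  · rw [vertexIdeal, Ideal.span_le]
    rintro _ ⟨v, hv, rfl⟩
    exact killVars_X_of_mem hv

end vertexIdeal

section closedNbhd

variable {V : Type*} [Fintype V] (G : SimpleGraph V)

lemma mem_closedNbhd {u v : V} : u ∈ closedNbhd G v ↔ u = v ∨ G.Adj v u := by
  simp [closedNbhd]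

lemma mem_closedNbhd_comm {u v : V} : u ∈ closedNbhd G v ↔ v ∈ closedNbhd G u := by
  simp only [mem_closedNbhd, eq_comm, G.adj_comm]

lemma mem_closedNbhdSet {A : Finset V} {v : V} :
    v ∈ closedNbhdSet G A ↔ ∃ u ∈ A, v ∈ closedNbhd G u := by
  simp [closedNbhdSet]

lemma eq_of_mem_privateNbrs {D : Finset V} {u d d' : V} (hu : u ∈ privateNbrs G D)
    (hd : d ∈ D) (hdu : d ∈ closedNbhd G u) (hd' : d' ∈ D) (hd'u : d' ∈ closedNbhd G u) :
    d' = d := by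
  simp only [privateNbrs, mem_filter, mem_univ, true_and] at hu
  exact card_le_one.1 hu.le d' (by simp [hd', hd'u]) d (by simp [hd, hdu])

end closedNbhd

section cnIdeal

variable {V : Type*} [Fintype V] [DecidableEq V] (K : Type*) [Field K] (G : SimpleGraph V)

lemma cnIdeal_le_vertexIdeal {D : Finset V} (hD : IsDominatingSet G D) :
    cnIdeal K G ≤ vertexIdeal K D := by
  rw [cnIdeal, Ideal.span_le]
  rintro _ ⟨w, rfl⟩
  obtain ⟨d, hdD, hwd⟩ := hD w
  dsimp only
  rw [← mul_prod_erase _ _ ((mem_closedNbhd_comm G).1 hwd)]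
  exact Ideal.mul_mem_right _ _ (Ideal.subset_span ⟨d, hdD, rfl⟩)

lemma colon_prod_X_le_vertexIdeal {D s : Finset V} (hD : IsDominatingSet G D)
    (hs : Disjoint s D) :
    Submodule.colon (cnIdeal K G) (Ideal.span {∏ v ∈ s, (X v : MvPolynomial V K)}) ≤
      vertexIdeal K D := by
  intro g hg
  rw [Ideal.mem_colon_span_singleton] at hg
  have hzero : killVars K D (g * ∏ v ∈ s, X v) = 0 := by
    rw [← RingHom.mem_ker, ker_killVars]
    exact cnIdeal_le_vertexIdeal K G hD hg
  rw [map_mul, killVars_prod_X_of_disjoint hs, mul_eq_zero,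
    or_iff_left (prod_ne_zero_iff.2 fun v _ => X_ne_zero v)] at hzero
  rw [← ker_killVars]
  exact hzero

lemma vertexIdeal_le_colon {D U : Finset V} (hU : U ⊆ privateNbrs G D)
    (hdom : D ⊆ closedNbhdSet G U) :
    vertexIdeal K D ≤
      Submodule.colon (cnIdeal K G)
        (Ideal.span {∏ v ∈ closedNbhdSet G U \ D, (X v : MvPolynomial V K)}) := by
  rw [vertexIdeal, Ideal.span_le]
  rintro _ ⟨d, hd, rfl⟩
  rw [SetLike.mem_coe, Ideal.mem_colon_span_singleton]
  obtain ⟨u, huU, hdu⟩ := (mem_closedNbhdSet G).1 (hdom hd)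
  have hsub : closedNbhd G u ⊆ insert d (closedNbhdSet G U \ D) := by
    intro w hw
    by_cases hwD : w ∈ D
    · exact mem_insert.2 <| .inl (eq_of_mem_privateNbrs G (hU huU) hd hdu hwD hw)
    · exact mem_insert_of_mem (mem_sdiff.2 ⟨(mem_closedNbhdSet G).2 ⟨u, huU, hw⟩, hwD⟩)
  have hdvd : ∏ w ∈ closedNbhd G u, (X w : MvPolynomial V K) ∣
      X d * ∏ v ∈ closedNbhdSet G U \ D, X v := by
    rw [← prod_insert fun h => (mem_sdiff.1 h).2 hd]
    exact prod_dvd_prod_of_subset _ _ _ hsub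
  obtain ⟨c, hc⟩ := hdvd
  rw [hc]
  exact Ideal.mul_mem_right _ _ (Ideal.subset_span ⟨u, rfl⟩)

end cnIdeal

theorem colon_of_private_dominating_general {V : Type*} [Fintype V] [DecidableEq V]
    (K : Type*) [Field K] (G : SimpleGraph V) (D U : Finset V)
    (hD : IsMinimalDominatingSet G D) (hU : U ⊆ privateNbrs G D)
    (hdom : D ⊆ closedNbhdSet G U) :
    Submodule.colon (cnIdeal K G)
        (Ideal.span {∏ v ∈ closedNbhdSet G U \ D, (X v : MvPolynomial V K)}) =
      vertexIdeal K D :=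
  le_antisymm (colon_prod_X_le_vertexIdeal K G hD.1 sdiff_disjoint)
    (vertexIdeal_le_colon K G hU hdom)

/-- If D is a minimal dominating set and U ⊆ P_N(D) dominates D, then the colon ideal
(N_G : t_{N[U] \ D}) equals the ideal of variables indexed by D. -/
theorem colon_of_private_dominating {V : Type*} [Fintype V] [DecidableEq V]
    (K : Type*) [Field K] (G : SimpleGraph V) (hG : G.Connected) (D U : Finset V)
    (hD : IsMinimalDominatingSet G D) (hU : U ⊆ privateNbrs G D)
    (hdom : D ⊆ closedNbhdSet G U) :
    Submodule.colon (cnIdeal K G)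
        (Ideal.span {∏ v ∈ closedNbhdSet G U \ D, (X v : MvPolynomial V K)}) =
      vertexIdeal K D :=
  colon_of_private_dominating_general K G D U hD hU hdom
end

section
/- Let G be a simple connected graph with closed neighborhood ideal N_G. Then the v-number of N_G is at most the vertex cover number of G, that is, v(N_G) ≤ τ(G). -/
open Finset MvPolynomial

noncomputable section
open scoped Classical

/-- The domination number: the minimum cardinality of a dominating set. -/
def dominationNumber {V : Type*} [Fintype V] (G : SimpleGraph V) : ℕ :=
  sInf {n : ℕ | ∃ D : Finset V, IsDominatingSet G D ∧ D.card = n}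

/-- A vertex cover: every edge is incident with a vertex of the set. -/
def IsVertexCover {V : Type*} (G : SimpleGraph V) (C : Finset V) : Prop :=
  ∀ u v : V, G.Adj u v → u ∈ C ∨ v ∈ C

/-- The vertex cover number: the minimum cardinality of a vertex cover. -/
def coverNumber {V : Type*} [Fintype V] (G : SimpleGraph V) : ℕ :=
  sInf {n : ℕ | ∃ C : Finset V, IsVertexCover G C ∧ C.card = n}

/-- A matching: a set of edges of the graph, no two of which share a vertex. -/
def IsMatchingSet {V : Type*} (G : SimpleGraph V) (M : Finset (Sym2 V)) : Prop :=
  (↑M ⊆ G.edgeSet) ∧ (M : Set (Sym2 V)).Pairwise fun e f => ∀ v : V, ¬(v ∈ e ∧ v ∈ f)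

/-- The matching number: the maximum cardinality of a matching. -/
def matchingNumber {V : Type*} [Fintype V] (G : SimpleGraph V) : ℕ :=
  sSup {n : ℕ | ∃ M : Finset (Sym2 V), IsMatchingSet G M ∧ M.card = n}

end

section aux
open scoped Classical

variable {V K : Type*} [Field K]

lemma auxProdX (T : Finset V) :
    (∏ w ∈ T, X w : MvPolynomial V K) = monomial (∑ w ∈ T, Finsupp.single w 1) 1 := by
  classical
  induction T using Finset.induction_on with
  | empty => simp
  | insert _ _ h ih =>
      rw [Finset.prod_insert h, Finset.sum_insert h, ih, ← pow_one (X _ : MvPolynomial V K),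
        X_pow_eq_monomial, monomial_mul, one_mul]

lemma auxSumSingle (T : Finset V) (u : V) :
    (∑ w ∈ T, Finsupp.single w (1:ℕ)) u = if u ∈ T then 1 else 0 := by
  classical
  rw [Finset.sum_apply']
  simp [Finsupp.single_apply]

lemma auxSpanXPrime (s : Set V) :
    (Ideal.span (X '' s : Set (MvPolynomial V K))).IsPrime := by
  set p : Ideal (MvPolynomial V K) := Ideal.span (X '' s) with hp
  set φ : MvPolynomial V K →ₐ[K] MvPolynomial V K :=
    aeval (fun i => if i ∈ s then 0 else X i) with hφ
  have hgen : ∀ i ∈ s, φ (X i) = 0 := by intro i hi; simp [hφ, hi]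
  have hker : ∀ f ∈ p, φ f = 0 := by
    have hle : p ≤ RingHom.ker (φ : MvPolynomial V K →+* MvPolynomial V K) := by
      rw [hp, Ideal.span_le]
      rintro g ⟨i, hi, rfl⟩
      simpa [RingHom.mem_ker] using hgen i hi
    intro f hf
    exact hle hf
  have hsub : ∀ f : MvPolynomial V K, f - φ f ∈ p := by
    intro f
    induction f using MvPolynomial.induction_on with
    | C a => simp [hφ]
    | add f g hf hg =>
        have h : (f + g) - φ (f + g) = (f - φ f) + (g - φ g) := by rw [map_add]; ring
        rw [h]; exact Ideal.add_mem _ hf hg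
    | mul_X f n hf =>
        have hXn : (X n : MvPolynomial V K) - φ (X n) ∈ p := by
          by_cases hn : n ∈ s
          · rw [hgen n hn, sub_zero]
            exact Ideal.subset_span (Set.mem_image_of_mem _ hn)
          · simp [hφ, hn]
        have h : f * X n - φ (f * X n) = (f - φ f) * X n + φ f * (X n - φ (X n)) := by
          rw [map_mul]; ring
        rw [h]
        exact Ideal.add_mem _ (Ideal.mul_mem_right _ _ hf) (Ideal.mul_mem_left _ _ hXn)
  constructor
  · intro h
    have h1 : (1 : MvPolynomial V K) ∈ p := h ▸ Submodule.mem_top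
    have h2 := hker 1 h1
    rw [map_one] at h2
    exact one_ne_zero h2
  · intro a b hab
    have h0 : φ a * φ b = 0 := by rw [← map_mul]; exact hker _ hab
    rcases mul_eq_zero.mp h0 with h | h
    · left; have := hsub a; rwa [h, sub_zero] at this
    · right; have := hsub b; rwa [h, sub_zero] at this

end aux

/-- The v-number of the closed neighborhood ideal is at most the vertex cover number. -/
theorem vNumber_le_coverNumber {V : Type*} [Fintype V] [DecidableEq V]
    (K : Type*) [Field K] (G : SimpleGraph V) (hG : G.Connected) :
    vNumber (cnIdeal K G) ≤ coverNumber G := by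
  classical
  set cs : Set ℕ := {n : ℕ | ∃ C : Finset V, IsVertexCover G C ∧ C.card = n} with hcs
  have hcov : coverNumber G = sInf cs := rfl
  have hne : cs.Nonempty :=
    ⟨Finset.univ.card, Finset.univ, fun u v _ => Or.inl (mem_univ u), rfl⟩
  obtain ⟨C, hC, hCcard⟩ := Nat.sInf_mem hne
  -- domination by the complement of C
  have hdom : ∀ v : V, ∃ u, u ∉ C ∧ (v = u ∨ G.Adj u v) := by
    intro v
    by_cases hv : v ∈ C
    · by_contra hcon
      push_neg at hcon
      have hCV : IsVertexCover G (C.erase v) := by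
        intro a b hab
        rcases eq_or_ne a v with rfl | ha
        · right
          refine Finset.mem_erase.mpr ⟨hab.ne', ?_⟩
          by_contra hbC
          exact (hcon b hbC).2 hab.symm
        · rcases eq_or_ne b v with rfl | hb
          · left
            refine Finset.mem_erase.mpr ⟨hab.ne, ?_⟩
            by_contra haC
            exact (hcon a haC).2 hab
          · rcases hC a b hab with h | h
            · exact Or.inl (Finset.mem_erase.mpr ⟨ha, h⟩)
            · exact Or.inr (Finset.mem_erase.mpr ⟨hb, h⟩)
      have hmem : (C.erase v).card ∈ cs := ⟨C.erase v, hCV, rfl⟩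
      have hle := Nat.sInf_le hmem
      rw [Finset.card_erase_of_mem hv] at hle
      have hpos : 0 < C.card := Finset.card_pos.mpr ⟨v, hv⟩
      omega
    · exact ⟨v, hv, Or.inl rfl⟩
  set S : Finset V := Finset.univ.filter (fun w => ∃ u, u ∉ C ∧ G.Adj u w) with hS
  have hSC : S ⊆ C := by
    intro w hw
    rw [hS, Finset.mem_filter] at hw
    obtain ⟨-, u, huC, hadj⟩ := hw
    rcases hC u w hadj with h | h
    · exact absurd h huC
    · exact h
  have hScard : S.card ≤ coverNumber G := by
    rw [hcov, ← hCcard]; exact Finset.card_le_card hSC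
  set f : MvPolynomial V K := ∏ w ∈ S, X w with hf
  set I : Ideal (MvPolynomial V K) := cnIdeal K G with hI
  set A : Set V := {u : V | u ∉ C} with hA
  set p : Ideal (MvPolynomial V K) := Ideal.span (X '' A) with hp
  -- exponent vectors
  set eV : V → (V →₀ ℕ) := fun v => ∑ u ∈ closedNbhd G v, Finsupp.single u 1 with heV
  have hIeq : I = Ideal.span ((fun s => monomial s (1:K)) '' Set.range eV) := by
    have h1 : (fun v => ∏ u ∈ closedNbhd G v, (X u : MvPolynomial V K))
        = (fun s => monomial s (1:K)) ∘ eV := funext fun v => auxProdX _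
    rw [hI, cnIdeal, h1, Set.range_comp]
  have hfm : f = monomial (∑ w ∈ S, Finsupp.single w 1) (1:K) := auxProdX S
  -- p ≤ colon
  have hple : p ≤ Submodule.colon I (Ideal.span {f}) := by
    rw [hp, Ideal.span_le]
    rintro g ⟨u, hu, rfl⟩
    rw [SetLike.mem_coe, Ideal.mem_colon_span_singleton]
    have huC : u ∉ C := hu
    have huS : u ∉ S := fun h => huC (hSC h)
    have hN : closedNbhd G u ⊆ insert u S := by
      intro w hw
      simp only [closedNbhd, Finset.mem_filter, Finset.mem_univ, true_and] at hw
      rcases hw with rfl | hadj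
      · exact Finset.mem_insert_self _ _
      · exact Finset.mem_insert_of_mem (by
          rw [hS, Finset.mem_filter]
          exact ⟨Finset.mem_univ _, u, huC, hadj⟩)
    have hcalc : X u * f = (∏ w ∈ insert u S \ closedNbhd G u, X w) *
        ∏ w ∈ closedNbhd G u, X w := by
      rw [hf, ← Finset.prod_insert huS, ← Finset.prod_sdiff hN]
    rw [hcalc]
    exact Ideal.mul_mem_left _ _ (Ideal.subset_span (Set.mem_range_self u))
  -- colon ≤ p
  have hcle : Submodule.colon I (Ideal.span {f}) ≤ p := by
    intro g hg
    have hgf : g * f ∈ I := Ideal.mem_colon_span_singleton.mp hg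
    rw [hIeq, mem_ideal_span_monomial_image] at hgf
    rw [hp, mem_ideal_span_X_image]
    intro μ hμ
    set ef : V →₀ ℕ := ∑ w ∈ S, Finsupp.single w 1 with hef
    have hco : coeff (μ + ef) (g * f) = coeff μ g := by
      rw [hfm, coeff_mul_monomial, mul_one]
    have hsupp : μ + ef ∈ (g * f).support := by
      rw [mem_support_iff, hco]
      exact mem_support_iff.mp hμ
    obtain ⟨sv, ⟨v, rfl⟩, hle⟩ := hgf _ hsupp
    obtain ⟨u, huC, huv⟩ := hdom v
    refine ⟨u, huC, ?_⟩
    have hucn : u ∈ closedNbhd G v := by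
      simp only [closedNbhd, Finset.mem_filter, Finset.mem_univ, true_and]
      rcases huv with h | h
      · exact Or.inl h.symm
      · exact Or.inr h.symm
    have h1 : eV v u = 1 := by
      rw [heV]
      rw [auxSumSingle, if_pos hucn]
    have h2 : ef u = 0 := by
      have huS : u ∉ S := fun h => huC (hSC h)
      rw [hef, auxSumSingle, if_neg huS]
    have h3 := hle u
    rw [Finsupp.add_apply, h1, h2] at h3
    omega
  have hcolon : Submodule.colon I (Ideal.span {f}) = p := le_antisymm hcle hple
  refine le_trans (Nat.sInf_le ⟨f, ?_, ?_⟩) hScard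
  · -- homogeneous of degree S.card
    have := MvPolynomial.IsHomogeneous.prod S (fun w => (X w : MvPolynomial V K))
      (fun _ => 1) (fun i _ => isHomogeneous_X K i)
    simpa [hf] using this
  · refine isAssociatedPrime_iff.mpr ⟨by rw [hcolon]; exact auxSpanXPrime A, Ideal.Quotient.mk I f, ?_⟩
    rw [hcolon]
    ext g
    rw [Submodule.mem_colon_singleton, Submodule.mem_bot]
    have hsm : g • (Ideal.Quotient.mk I f) = Ideal.Quotient.mk I (g * f) := rfl
    rw [hsm, Ideal.Quotient.eq_zero_iff_mem]
    constructor
    · intro h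
      exact Ideal.mem_colon_span_singleton.mp (hple h)
    · intro h
      exact hcle (Ideal.mem_colon_span_singleton.mpr h)
end

section
/- Let r ≥ 2 and let n_1 ≥ n_2 ≥ ⋯ ≥ n_r ≥ 2 be integers. For the complete r-partite graph K_{n_1,…,n_r}, the v-number of its closed neighborhood ideal is v(N_{K_{n_1,…,n_r}}) = n_2 + n_3 + ⋯ + n_r. -/
open Finset MvPolynomial

noncomputable section CNAux
open Finset MvPolynomial
open scoped Classical

set_option linter.unusedSectionVars false

variable {V : Type*} [Fintype V] {K : Type*} [Field K]

lemma CN.prodX_eq_monomial (s : Finset V) :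
    (∏ u ∈ s, X u : MvPolynomial V K) = monomial (∑ u ∈ s, Finsupp.single u 1) 1 := by
  induction s using Finset.cons_induction with
  | empty => simp
  | cons a s ha ih =>
      rw [Finset.prod_cons, Finset.sum_cons, ih, X, monomial_mul, one_mul]

lemma CN.msOf_apply (s : Finset V) (w : V) :
    (∑ u ∈ s, Finsupp.single u 1 : V →₀ ℕ) w = if w ∈ s then 1 else 0 := by
  rw [Finset.sum_apply']
  simp [Finsupp.single_apply]

lemma CN.degree_eq_sum_univ (m : V →₀ ℕ) : m.degree = ∑ w ∈ univ, m w := by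
  rw [Finsupp.degree]
  exact Finset.sum_subset (Finset.subset_univ _) (by simp)

lemma CN.mem_cnIdeal_iff (G : SimpleGraph V) (p : MvPolynomial V K) :
    p ∈ cnIdeal K G ↔ ∀ m ∈ p.support,
      ∃ v : V, (∑ u ∈ closedNbhd G v, Finsupp.single u 1 : V →₀ ℕ) ≤ m := by
  have h : (Set.range fun v => ∏ u ∈ closedNbhd G v, (X u : MvPolynomial V K))
      = (fun s => monomial s (1 : K)) ''
        (Set.range fun v => (∑ u ∈ closedNbhd G v, Finsupp.single u 1 : V →₀ ℕ)) := by
    ext q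
    simp only [Set.mem_range, Set.mem_image, CN.prodX_eq_monomial]
    constructor
    · rintro ⟨v, rfl⟩; exact ⟨_, ⟨v, rfl⟩, rfl⟩
    · rintro ⟨s, ⟨v, rfl⟩, rfl⟩; exact ⟨v, rfl⟩
  rw [cnIdeal, h, mem_ideal_span_monomial_image]
  simp only [Set.exists_range_iff]

lemma CN.aeval_monomial_ite (A : Set V) (m : V →₀ ℕ) (c : K) :
    (aeval (fun u : V => if u ∈ A then 0 else X u) : MvPolynomial V K →ₐ[K] MvPolynomial V K)
      (monomial m c)
    = if (∀ u ∈ A, m u = 0) then monomial m c else 0 := by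
  rw [aeval_monomial]
  split_ifs with h
  · rw [monomial_eq]
    congr 1
    apply Finsupp.prod_congr
    intro u hu
    rw [if_neg]
    intro hA
    exact absurd (h u hA) (Finsupp.mem_support_iff.mp hu)
  · push_neg at h
    obtain ⟨u, hA, hu⟩ := h
    rw [Finsupp.prod]
    apply mul_eq_zero_of_right
    apply Finset.prod_eq_zero (Finsupp.mem_support_iff.mpr hu)
    rw [if_pos hA, zero_pow hu]

lemma CN.span_X_image_eq_ker (A : Set V) :
    Ideal.span (MvPolynomial.X '' A : Set (MvPolynomial V K)) =
      RingHom.ker ((aeval (fun u : V => if u ∈ A then 0 else X u) :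
        MvPolynomial V K →ₐ[K] MvPolynomial V K) : MvPolynomial V K →+* MvPolynomial V K) := by
  apply le_antisymm
  · rw [Ideal.span_le]
    rintro _ ⟨u, hu, rfl⟩
    simp [RingHom.mem_ker, hu]
  · intro g hg
    rw [RingHom.mem_ker] at hg
    rw [mem_ideal_span_X_image]
    intro m hm
    by_contra hcon
    push_neg at hcon
    have havoid : ∀ u ∈ A, m u = 0 := hcon
    have hco : coeff m ((aeval (fun u : V => if u ∈ A then 0 else X u) :
        MvPolynomial V K →ₐ[K] MvPolynomial V K) g) = coeff m g := by
      conv_lhs => rw [g.as_sum, map_sum]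
      rw [coeff_sum]
      rw [Finset.sum_eq_single m]
      · rw [CN.aeval_monomial_ite, if_pos havoid, coeff_monomial, if_pos rfl]
      · intro b hb hbm
        rw [CN.aeval_monomial_ite]
        split_ifs with h
        · rw [coeff_monomial, if_neg hbm]
        · rw [coeff_zero]
      · intro h; exact absurd hm h
    rw [show ((aeval fun u => if u ∈ A then 0 else X u) g) = 0 from hg, coeff_zero] at hco
    exact absurd hco.symm (mem_support_iff.mp hm)

lemma CN.isPrime_span_X_image (A : Set V) :
    (Ideal.span (MvPolynomial.X '' A : Set (MvPolynomial V K))).IsPrime := by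
  rw [CN.span_X_image_eq_ker]
  exact RingHom.ker_isPrime _

variable {r : ℕ} {n : Fin r → ℕ}

lemma CN.mem_closedNbhd_cmp (v u : (i : Fin r) × Fin (n i)) :
    u ∈ closedNbhd (SimpleGraph.completeMultipartiteGraph fun i : Fin r => Fin (n i)) v
      ↔ (u = v ∨ v.1 ≠ u.1) := by
  simp [closedNbhd]

lemma CN.closedNbhd_cmp (v : (i : Fin r) × Fin (n i)) :
    closedNbhd (SimpleGraph.completeMultipartiteGraph fun i : Fin r => Fin (n i)) v
      = insert v (univ.filter fun u : (i : Fin r) × Fin (n i) => u.1 ≠ v.1) := by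
  ext u
  rw [CN.mem_closedNbhd_cmp]
  simp only [mem_insert, mem_filter, mem_univ, true_and]
  constructor
  · rintro (rfl | h); exacts [Or.inl rfl, Or.inr (Ne.symm h)]
  · rintro (rfl | h); exacts [Or.inl rfl, Or.inr (Ne.symm h)]

lemma CN.filter_fst_ne_card (i : Fin r) :
    (univ.filter fun u : (j : Fin r) × Fin (n j) => u.1 ≠ i).card = ∑ j ∈ univ.erase i, n j := by
  rw [show (univ.filter fun u : (j : Fin r) × Fin (n j) => u.1 ≠ i)
      = (univ.erase i).sigma (fun j => (univ : Finset (Fin (n j)))) by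
    ext ⟨j, x⟩; simp, Finset.card_sigma]
  simp

lemma CN.card_closedNbhd_cmp (v : (i : Fin r) × Fin (n i)) :
    (closedNbhd (SimpleGraph.completeMultipartiteGraph fun i : Fin r => Fin (n i)) v).card
      = 1 + ∑ j ∈ univ.erase v.1, n j := by
  rw [CN.closedNbhd_cmp, Finset.card_insert_of_notMem (by simp), CN.filter_fst_ne_card]
  omega

end CNAux

/-- The v-number of the closed neighborhood ideal of the complete r-partite graph
with part sizes n_1 ≥ ⋯ ≥ n_r ≥ 2 equals n_2 + ⋯ + n_r. -/
theorem vNumber_completeMultipartite (K : Type*) [Field K] (r : ℕ) (hr : 2 ≤ r)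
    (n : Fin r → ℕ) (hmono : ∀ i j : Fin r, i ≤ j → n j ≤ n i) (h2 : ∀ i, 2 ≤ n i) :
    vNumber (cnIdeal K (SimpleGraph.completeMultipartiteGraph fun i : Fin r => Fin (n i))) =
      ∑ i ∈ Finset.univ.filter (fun i : Fin r => i.val ≠ 0), n i := by
  classical
  have h0r : 0 < r := by omega
  set i0 : Fin r := ⟨0, h0r⟩ with hi0
  have hn0 : 0 < n i0 := by have := h2 i0; omega
  set I := cnIdeal K (SimpleGraph.completeMultipartiteGraph fun i : Fin r => Fin (n i)) with hIdef
  set D := ∑ i ∈ Finset.univ.filter (fun i : Fin r => i.val ≠ 0), n i with hDdef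
  have hfilter : (Finset.univ.filter fun i : Fin r => i.val ≠ 0) = Finset.univ.erase i0 := by
    ext j
    simp [Finset.mem_erase, Fin.ext_iff, hi0]
  have hDle : ∀ i : Fin r, D ≤ ∑ j ∈ Finset.univ.erase i, n j := by
    intro i
    have e1 : ∑ j ∈ Finset.univ.erase i, n j + n i = ∑ j ∈ Finset.univ, n j :=
      Finset.sum_erase_add _ _ (Finset.mem_univ i)
    have e2 : ∑ j ∈ Finset.univ.erase i0, n j + n i0 = ∑ j ∈ Finset.univ, n j :=
      Finset.sum_erase_add _ _ (Finset.mem_univ i0)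
    have e3 : n i ≤ n i0 := hmono i0 i (by simp [hi0, Fin.le_def])
    rw [hDdef, hfilter]
    omega
  set T := Finset.univ.filter (fun u : (i : Fin r) × Fin (n i) => u.1 ≠ i0) with hT
  set mf : ((i : Fin r) × Fin (n i)) →₀ ℕ := ∑ u ∈ T, Finsupp.single u 1 with hmf
  set f : MvPolynomial ((i : Fin r) × Fin (n i)) K := ∏ u ∈ T, X u with hf
  have hmf_apply : ∀ w : (i : Fin r) × Fin (n i), mf w = if w.1 ≠ i0 then 1 else 0 := by
    intro w
    rw [hmf, CN.msOf_apply]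
    simp [hT]
  set v0 : (i : Fin r) × Fin (n i) := ⟨i0, ⟨0, hn0⟩⟩ with hv0
  set A : Set ((i : Fin r) × Fin (n i)) := {u | u.1 = i0} with hA
  have hmv_apply : ∀ v w : (i : Fin r) × Fin (n i),
      (∑ u ∈ closedNbhd (SimpleGraph.completeMultipartiteGraph fun i : Fin r => Fin (n i)) v,
        Finsupp.single u 1 : ((i : Fin r) × Fin (n i)) →₀ ℕ) w
        = if (w = v ∨ v.1 ≠ w.1) then 1 else 0 := by
    intro v w
    rw [CN.msOf_apply]
    congr 1
    simp [CN.mem_closedNbhd_cmp]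
  have hcolon_mem : ∀ g : MvPolynomial ((i : Fin r) × Fin (n i)) K,
      g ∈ Submodule.colon I (Ideal.span {f}) ↔ g * f ∈ I := by
    intro g
    rw [← Ideal.submodule_span_eq, Submodule.mem_colon_span_singleton, smul_eq_mul]
  have hcolon : Submodule.colon I (Ideal.span {f}) = Ideal.span (X '' A) := by
    ext g
    rw [hcolon_mem g, hIdef, CN.mem_cnIdeal_iff, mem_ideal_span_X_image]
    constructor
    · intro hgf m hm
      have hMem : m + mf ∈ (g * f).support := by
        rw [mem_support_iff, hf, CN.prodX_eq_monomial, ← hmf, coeff_mul_monomial, mul_one]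
        exact mem_support_iff.mp hm
      obtain ⟨v, hv⟩ := hgf _ hMem
      have hvle := Finsupp.le_def.mp hv
      by_cases hc : v.1 = i0
      · refine ⟨v, hc, ?_⟩
        have h1 := hvle v
        rw [hmv_apply, if_pos (Or.inl rfl), Finsupp.add_apply, hmf_apply] at h1
        rw [if_neg (by simp [hc])] at h1
        omega
      · refine ⟨v0, rfl, ?_⟩
        have h1 := hvle v0
        rw [hmv_apply, if_pos (Or.inr (by simp [hv0, hc])), Finsupp.add_apply, hmf_apply] at h1
        rw [if_neg (by simp [hv0])] at h1
        omega
    · intro hg M hM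
      rw [mem_support_iff, hf, CN.prodX_eq_monomial, ← hmf, coeff_mul_monomial'] at hM
      by_cases hle : mf ≤ M
      · rw [if_pos hle, mul_one] at hM
        obtain ⟨u, hu, hmu⟩ := hg (M - mf) (mem_support_iff.mpr hM)
        have hui0 : u.1 = i0 := hu
        refine ⟨u, Finsupp.le_def.mpr fun w => ?_⟩
        rw [hmv_apply]
        split_ifs with h
        · rcases h with rfl | hne
          · rw [Finsupp.tsub_apply] at hmu
            omega
          · have h5 := Finsupp.le_def.mp hle w
            rw [hmf_apply, if_pos (by rw [← hui0]; exact Ne.symm hne)] at h5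
            omega
        · exact Nat.zero_le _
      · rw [if_neg hle] at hM
        exact absurd rfl hM
  have hfhom : f.IsHomogeneous D := by
    have h := IsHomogeneous.prod T (fun u => (X u : MvPolynomial ((i : Fin r) × Fin (n i)) K))
      (fun _ => 1) (fun u _ => isHomogeneous_X K u)
    have hc : ∑ _u ∈ T, (1 : ℕ) = D := by
      rw [Finset.sum_const, smul_eq_mul, mul_one, hT, CN.filter_fst_ne_card, hDdef, hfilter]
    rwa [hc] at h
  have hass : Submodule.colon I (Ideal.span {f}) ∈
      associatedPrimes (MvPolynomial ((i : Fin r) × Fin (n i)) K)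
        (MvPolynomial ((i : Fin r) × Fin (n i)) K ⧸ I) := by
    refine ⟨?_, Ideal.Quotient.mkₐ (MvPolynomial ((i : Fin r) × Fin (n i)) K) I f, ?_⟩
    · rw [hcolon]
      exact CN.isPrime_span_X_image A
    · have key : Submodule.colon I (Ideal.span {f}) = (⊥ : Submodule (MvPolynomial ((i : Fin r) × Fin (n i)) K)
          (MvPolynomial ((i : Fin r) × Fin (n i)) K ⧸ I)).colon
          {Ideal.Quotient.mkₐ (MvPolynomial ((i : Fin r) × Fin (n i)) K) I f} := by
        ext g
        rw [hcolon_mem g, Submodule.mem_colon_singleton, Submodule.mem_bot, ← map_smul, smul_eq_mul,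
          Ideal.Quotient.mkₐ_eq_mk, ← Ideal.Quotient.mk_eq_mk, Submodule.Quotient.mk_eq_zero]
      rw [← key, hcolon, (CN.isPrime_span_X_image A).radical]
  have hmemD : D ∈ {d : ℕ | ∃ g : MvPolynomial ((i : Fin r) × Fin (n i)) K, g.IsHomogeneous d ∧
      Submodule.colon I (Ideal.span {g}) ∈
        associatedPrimes (MvPolynomial ((i : Fin r) × Fin (n i)) K)
          (MvPolynomial ((i : Fin r) × Fin (n i)) K ⧸ I)} := ⟨f, hfhom, hass⟩
  have hlow : ∀ d ∈ {d : ℕ | ∃ g : MvPolynomial ((i : Fin r) × Fin (n i)) K, g.IsHomogeneous d ∧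
      Submodule.colon I (Ideal.span {g}) ∈
        associatedPrimes (MvPolynomial ((i : Fin r) × Fin (n i)) K)
          (MvPolynomial ((i : Fin r) × Fin (n i)) K ⧸ I)}, D ≤ d := by
    intro d hd
    obtain ⟨g, hghom, hgass⟩ := hd
    have hprime : (Submodule.colon I (Ideal.span {g})).IsPrime := hgass.1
    have hg0 : g ≠ 0 := by
      rintro rfl
      apply hprime.ne_top
      rw [eq_top_iff]
      intro p _
      rw [Submodule.mem_colon]
      intro q hq
      rw [Ideal.span_singleton_eq_bot.mpr rfl] at hq
      rw [SetLike.mem_coe, Submodule.mem_bot] at hq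
      rw [hq, smul_zero]
      exact I.zero_mem
    have hgmem : ∀ p : MvPolynomial ((i : Fin r) × Fin (n i)) K,
        p ∈ Submodule.colon I (Ideal.span {g}) ↔ p * g ∈ I := by
      intro p
      rw [← Ideal.submodule_span_eq, Submodule.mem_colon_span_singleton, smul_eq_mul]
    have hIP : I ≤ Submodule.colon I (Ideal.span {g}) := by
      intro p hp
      rw [hgmem]
      exact Ideal.mul_mem_right g I hp
    have hgv0 : (∏ u ∈ closedNbhd (SimpleGraph.completeMultipartiteGraph
        fun i : Fin r => Fin (n i)) v0, (X u : MvPolynomial ((i : Fin r) × Fin (n i)) K)) ∈ I := by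
      rw [hIdef, cnIdeal]
      exact Ideal.subset_span ⟨v0, rfl⟩
    haveI := hprime
    obtain ⟨u, -, hXu⟩ := (Ideal.IsPrime.prod_mem_iff).mp (hIP hgv0)
    have hXuf : X u * g ∈ I := (hgmem _).mp hXu
    have hne : X u * g ≠ 0 := mul_ne_zero (X_ne_zero u) hg0
    have hhom : (X u * g).IsHomogeneous (1 + d) := (isHomogeneous_X K u).mul hghom
    obtain ⟨M, hM⟩ := MvPolynomial.support_nonempty.mpr hne
    have hdegM : M.degree = 1 + d := by
      rw [Finsupp.degree_eq_weight_one]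
      exact hhom (mem_support_iff.mp hM)
    obtain ⟨v, hv⟩ := (CN.mem_cnIdeal_iff _ _).mp (hIdef ▸ hXuf) M hM
    have hdmv : (∑ u ∈ closedNbhd (SimpleGraph.completeMultipartiteGraph
        fun i : Fin r => Fin (n i)) v, Finsupp.single u 1 :
          ((i : Fin r) × Fin (n i)) →₀ ℕ).degree = 1 + ∑ j ∈ Finset.univ.erase v.1, n j := by
      rw [CN.degree_eq_sum_univ]
      rw [← CN.card_closedNbhd_cmp v]
      simp [CN.msOf_apply]
    have hmono2 : (∑ u ∈ closedNbhd (SimpleGraph.completeMultipartiteGraph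
        fun i : Fin r => Fin (n i)) v, Finsupp.single u 1 :
          ((i : Fin r) × Fin (n i)) →₀ ℕ).degree ≤ M.degree := by
      rw [CN.degree_eq_sum_univ, CN.degree_eq_sum_univ]
      exact Finset.sum_le_sum fun w _ => Finsupp.le_def.mp hv w
    have := hDle v.1
    omega
  rw [vNumber]
  exact le_antisymm (Nat.sInf_le hmemD) (le_csInf ⟨D, hmemD⟩ hlow)
end

section
/- For the complete graph K_n on n ≥ 2 vertices, the v-number of its closed neighborhood ideal is v(N_{K_n}) = n − 1. -/
open Finset MvPolynomial

namespace VNumAux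

noncomputable section
open scoped Classical

lemma mem_colon_span_singleton {R : Type*} [CommRing R] (I : Ideal R) (f g : R) :
    g ∈ Submodule.colon I (Ideal.span {f}) ↔ g * f ∈ I := by
  have h := Submodule.mem_colon_singleton (N := I) (x := f) (r := g)
  rw [Ideal.colon_span]; rwa [smul_eq_mul] at h

lemma prime_X_gen {σ : Type*} {K : Type*} [Field K] (j : σ) :
    Prime (X j : MvPolynomial σ K) := by
  classical
  set D : MvPolynomial σ K →ₐ[K] MvPolynomial σ K := aeval (Function.update X j 0) with hD
  have hDX : D (X j) = 0 := by rw [hD, aeval_X, Function.update_self]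
  have hdvd : ∀ x : MvPolynomial σ K, X j ∣ x - D x := by
    intro x
    induction x using MvPolynomial.induction_on with
    | C a => simp [hD, aeval_C]
    | add p q hp hq =>
        have h := dvd_add hp hq
        rw [map_add]
        have : p - D p + (q - D q) = p + q - (D p + D q) := by ring
        rwa [this] at h
    | mul_X p u hp =>
        rcases eq_or_ne u j with rfl | hu
        · rw [map_mul, hDX, mul_zero, sub_zero]
          exact dvd_mul_left (X u) p
        · rw [map_mul, hD, aeval_X, Function.update_of_ne hu, ← hD]
          have : p * X u - D p * X u = (p - D p) * X u := by ring
          rw [this]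
          exact hp.mul_right _
  have hker : ∀ x : MvPolynomial σ K, X j ∣ x ↔ D x = 0 := by
    intro x
    constructor
    · rintro ⟨c, rfl⟩; rw [map_mul, hDX, zero_mul]
    · intro h
      have h2 := hdvd x
      rwa [h, sub_zero] at h2
  refine ⟨X_ne_zero j, ?_, fun a b hab => ?_⟩
  · intro hu
    have h := hu.map (constantCoeff (σ := σ) (R := K))
    rw [constantCoeff_X] at h
    exact not_isUnit_zero h
  · rw [hker] at hab
    rw [hker, hker]
    rw [map_mul] at hab
    exact mul_eq_zero.mp hab

variable {K : Type*} [Field K] {n : ℕ}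

lemma prod_X_eq_monomial (s : Finset (Fin n)) :
    (∏ u ∈ s, (X u : MvPolynomial (Fin n) K)) =
      monomial (∑ u ∈ s, Finsupp.single u 1) 1 := by
  induction s using Finset.induction with
  | empty => simp
  | @insert a t ha ih =>
      rw [Finset.prod_insert ha, Finset.sum_insert ha, ih, ← pow_one (X a),
        X_pow_eq_monomial, monomial_mul, one_mul]

lemma weight_sum_single (s : Finset (Fin n)) :
    Finsupp.weight (1 : Fin n → ℕ) (∑ u ∈ s, Finsupp.single u 1) = s.card := by
  rw [map_sum]
  simp [Finsupp.weight_apply, Finsupp.sum_single_index]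

end
end VNumAux


/-- The v-number of the closed neighborhood ideal of the complete graph on n ≥ 2
vertices equals n - 1. -/
theorem vNumber_completeGraph (K : Type*) [Field K] (n : ℕ) (hn : 2 ≤ n) :
    vNumber (cnIdeal K (⊤ : SimpleGraph (Fin n))) = n - 1 := by
  classical
  have hn0 : 0 < n := by omega
  haveI : Nonempty (Fin n) := ⟨⟨0, hn0⟩⟩
  set m : MvPolynomial (Fin n) K := ∏ u : Fin n, X u with hm_def
  set I : Ideal (MvPolynomial (Fin n) K) := Ideal.span {m} with hI_def
  have hI : cnIdeal K (⊤ : SimpleGraph (Fin n)) = I := by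
    have hnb : ∀ v : Fin n, closedNbhd (⊤ : SimpleGraph (Fin n)) v = univ := by
      intro v
      ext u
      simp only [closedNbhd, Finset.mem_filter, Finset.mem_univ, true_and, iff_true,
        SimpleGraph.top_adj]
      rcases eq_or_ne v u with h | h
      · exact Or.inl h.symm
      · exact Or.inr h
    unfold cnIdeal
    have : (fun v : Fin n => ∏ u ∈ closedNbhd (⊤ : SimpleGraph (Fin n)) v,
        (X u : MvPolynomial (Fin n) K)) = fun _ => m := by
      funext v; rw [hnb]
    rw [this, Set.range_const]
  have hXne : ∀ j : Fin n, (X j : MvPolynomial (Fin n) K) ≠ 0 := fun j => X_ne_zero j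
  have hprodne : ∀ s : Finset (Fin n), (∏ u ∈ s, (X u : MvPolynomial (Fin n) K)) ≠ 0 :=
    fun s => Finset.prod_ne_zero_iff.mpr fun u _ => hXne u
  have hcolon : ∀ j : Fin n,
      Submodule.colon I (Ideal.span {∏ u ∈ univ.erase j, (X u : MvPolynomial (Fin n) K)})
        = Ideal.span {X j} := by
    intro j
    have hm : m = X j * ∏ u ∈ univ.erase j, X u :=
      (Finset.mul_prod_erase univ _ (Finset.mem_univ j)).symm
    ext g
    rw [VNumAux.mem_colon_span_singleton, hI_def, Ideal.mem_span_singleton,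
      Ideal.mem_span_singleton, hm, mul_comm (X j) _, mul_comm g _,
      mul_dvd_mul_iff_left (hprodne (univ.erase j))]
  have hhom : ∀ j : Fin n,
      (∏ u ∈ univ.erase j, (X u : MvPolynomial (Fin n) K)).IsHomogeneous (n - 1) := by
    intro j
    have h := MvPolynomial.IsHomogeneous.prod (univ.erase j)
      (fun u => (X u : MvPolynomial (Fin n) K)) (fun _ => 1)
      (fun u _ => isHomogeneous_X K u)
    simpa [Finset.card_erase_of_mem, Finset.card_univ] using h
  have hass : ∀ j : Fin n,
      Ideal.span {(X j : MvPolynomial (Fin n) K)} ∈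
        associatedPrimes (MvPolynomial (Fin n) K) (MvPolynomial (Fin n) K ⧸ I) := by
    intro j
    refine ⟨(Ideal.span_singleton_prime (hXne j)).mpr (VNumAux.prime_X_gen j),
      ⟨Ideal.Quotient.mk I (∏ u ∈ univ.erase j, X u), ?_⟩⟩
    rw [← hcolon j]
    have hpr : (Submodule.colon I (Ideal.span {∏ u ∈ univ.erase j, (X u : MvPolynomial (Fin n) K)})).IsPrime := by
      rw [hcolon j]; exact (Ideal.span_singleton_prime (hXne j)).mpr (VNumAux.prime_X_gen j)
    rw [← hpr.radical]
    congr 1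
    ext r
    rw [Submodule.mem_colon_singleton, Submodule.mem_bot, VNumAux.mem_colon_span_singleton]
    have hsmul : r • (Ideal.Quotient.mk I (∏ u ∈ univ.erase j, X u)) =
        Ideal.Quotient.mk I (r * ∏ u ∈ univ.erase j, X u) := rfl
    rw [hsmul, Ideal.Quotient.eq_zero_iff_mem]
  have hmem : (n - 1) ∈ {d : ℕ | ∃ f : MvPolynomial (Fin n) K, f.IsHomogeneous d ∧
      Submodule.colon I (Ideal.span {f}) ∈
        associatedPrimes (MvPolynomial (Fin n) K) (MvPolynomial (Fin n) K ⧸ I)} := by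
    refine ⟨∏ u ∈ univ.erase ⟨0, hn0⟩, X u, hhom _, ?_⟩
    rw [hcolon]
    exact hass _
  have hlb : ∀ d ∈ {d : ℕ | ∃ f : MvPolynomial (Fin n) K, f.IsHomogeneous d ∧
      Submodule.colon I (Ideal.span {f}) ∈
        associatedPrimes (MvPolynomial (Fin n) K) (MvPolynomial (Fin n) K ⧸ I)},
      n - 1 ≤ d := by
    rintro d ⟨f, hf, hassf⟩
    have hp : (Submodule.colon I (Ideal.span {f})).IsPrime := hassf.isPrime
    have hfne : f ≠ 0 := by
      rintro rfl
      apply hp.ne_top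
      rw [Ideal.eq_top_iff_one, VNumAux.mem_colon_span_singleton, mul_zero]
      exact Ideal.zero_mem I
    have hmp : m ∈ Submodule.colon I (Ideal.span {f}) := by
      rw [VNumAux.mem_colon_span_singleton, hI_def, Ideal.mem_span_singleton]
      exact dvd_mul_right m f
    rw [hm_def] at hmp
    obtain ⟨j, -, hXj⟩ := (Ideal.IsPrime.prod_mem_iff (hp := hp)).mp hmp
    rw [VNumAux.mem_colon_span_singleton, hI_def, Ideal.mem_span_singleton,
      hm_def] at hXj
    rw [← Finset.mul_prod_erase univ _ (Finset.mem_univ j)] at hXj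
    rw [mul_dvd_mul_iff_left (hXne j)] at hXj
    obtain ⟨q, hq⟩ := hXj
    have hqne : q ≠ 0 := by
      rintro rfl
      exact hfne (by simpa using hq)
    obtain ⟨c, hc⟩ := MvPolynomial.ne_zero_iff.mp hqne
    set s0 : Fin n →₀ ℕ := ∑ u ∈ univ.erase j, Finsupp.single u 1 with hs0
    have hcoeff : coeff (s0 + c) f ≠ 0 := by
      rw [hq, VNumAux.prod_X_eq_monomial, ← hs0, coeff_monomial_mul, one_mul]
      exact hc
    have hw := hf hcoeff
    rw [map_add] at hw
    have hws0 : Finsupp.weight (1 : Fin n → ℕ) s0 = n - 1 := by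
      rw [hs0, VNumAux.weight_sum_single, Finset.card_erase_of_mem (Finset.mem_univ j),
        Finset.card_univ, Fintype.card_fin]
    omega
  rw [hI]
  unfold vNumber
  exact le_antisymm (Nat.sInf_le hmem) (le_csInf ⟨_, hmem⟩ hlb)
end

section
/- Let q be a prime power, r ≥ 2, and n = (q^r − 1)/(q − 1). Then the domination number of the Hamming graph Γ(n,q) is γ(Γ(n,q)) = q^{n−r}. -/
open Finset MvPolynomial

/-- The Hamming graph on F^m: vertices are m-tuples over F, and two vertices are
adjacent if and only if their Hamming distance is 1. -/
def hammingGraph (F : Type*) [DecidableEq F] (m : ℕ) : SimpleGraph (Fin m → F) where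
  Adj x y := hammingDist x y = 1
  symm := by constructor; intro x y h; rwa [hammingDist_comm]
  loopless := by constructor; intro x h; simp [hammingDist_self] at h


section HammingDomination

open scoped Classical LinearAlgebra.Projectivization
open Finset

set_option linter.unusedSectionVars false

variable {F : Type*} [Field F] [Fintype F] [DecidableEq F] {m : ℕ}

lemma hamming_update_dist (v : Fin m → F) (i : Fin m) (b : F) (hb : b ≠ v i) :
    hammingDist v (Function.update v i b) = 1 := by
  unfold hammingDist
  have h : ({j | v j ≠ Function.update v i b j} : Finset (Fin m)) = {i} := by
    ext j
    simp only [Finset.mem_filter, Finset.mem_univ, true_and, Finset.mem_singleton,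
      Function.update_apply]
    constructor
    · intro hj
      by_contra h
      simp [h] at hj
    · rintro rfl
      simp [Ne.symm hb]
  rw [h, Finset.card_singleton]

lemma hamming_dist_one (v u : Fin m → F) (h : hammingDist v u = 1) :
    ∃ i : Fin m, ∃ b : F, b ≠ v i ∧ u = Function.update v i b := by
  unfold hammingDist at h
  obtain ⟨i, hi⟩ := Finset.card_eq_one.mp h
  have hiu : v i ≠ u i := by
    have h2 : i ∈ ({j | v j ≠ u j} : Finset (Fin m)) := by
      rw [hi]; exact Finset.mem_singleton_self i
    simpa using h2
  refine ⟨i, u i, Ne.symm hiu, funext fun j => ?_⟩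
  by_cases hj : j = i
  · subst hj; simp
  · have h3 : j ∉ ({j | v j ≠ u j} : Finset (Fin m)) := by rw [hi]; simpa using hj
    simp only [Finset.mem_filter, Finset.mem_univ, true_and, not_not] at h3
    rw [Function.update_apply, if_neg hj, h3]

lemma mem_closedNbhd_hamming (v u : Fin m → F) :
    u ∈ closedNbhd (hammingGraph F m) v ↔ u = v ∨ hammingDist v u = 1 := by
  unfold closedNbhd
  simp only [Finset.mem_filter, Finset.mem_univ, true_and]
  rfl

lemma card_closedNbhd_hamming (v : Fin m → F) :
    (closedNbhd (hammingGraph F m) v).card = 1 + m * (Fintype.card F - 1) := by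
  have hsplit : closedNbhd (hammingGraph F m) v =
      insert v ({u | hammingDist v u = 1} : Finset (Fin m → F)) := by
    ext u
    rw [mem_closedNbhd_hamming]
    simp [eq_comm]
  have hv : v ∉ ({u | hammingDist v u = 1} : Finset (Fin m → F)) := by
    simp [hammingDist_self]
  rw [hsplit, Finset.card_insert_of_notMem hv, Nat.add_comm]
  have hcard : ({u | hammingDist v u = 1} : Finset (Fin m → F)).card
      = m * (Fintype.card F - 1) := by
    have hbij : (Finset.univ : Finset (Σ i : Fin m, {b : F // b ≠ v i})).card
        = ({u | hammingDist v u = 1} : Finset (Fin m → F)).card := Finset.card_bij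
      (fun (p : Σ i : Fin m, {b : F // b ≠ v i}) (_ : p ∈ (Finset.univ : Finset _)) =>
        Function.update v p.1 p.2.1)
      (fun p _ => by
        simp only [Finset.mem_filter, Finset.mem_univ, true_and]
        exact hamming_update_dist v p.1 p.2.1 p.2.2)
      (fun p _ q _ hpq => by
        obtain ⟨i, b, hb⟩ := p
        obtain ⟨j, c, hc⟩ := q
        by_cases hij : i = j
        · subst hij
          have hbc : b = c := by
            have h1 : Function.update v i b i = Function.update v i c i := congrFun hpq i
            simpa using h1
          subst hbc; rfl
        · exfalso
          have h1 : Function.update v i b i = Function.update v j c i := congrFun hpq i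
          rw [Function.update_self, Function.update_apply, if_neg hij] at h1
          exact hb h1
      )
      (fun u hu => by
        simp only [Finset.mem_filter, Finset.mem_univ, true_and] at hu
        obtain ⟨i, b, hb, rfl⟩ := hamming_dist_one v u hu
        exact ⟨⟨i, b, hb⟩, Finset.mem_univ _, rfl⟩)
    rw [← hbij]
    rw [Finset.card_univ, Fintype.card_sigma]
    have hone : ∀ i : Fin m, Fintype.card {b : F // b ≠ v i} = Fintype.card F - 1 := by
      intro i
      rw [Fintype.card_subtype_compl (p := (· = v i))]
      congr 1
    simp only [hone, Finset.sum_const, Finset.card_univ, Fintype.card_fin, smul_eq_mul]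
  rw [hcard]

noncomputable instance instFintypeProjectivization {K W : Type*} [DivisionRing K]
    [AddCommGroup W] [Module K W] [Fintype W] : Fintype (ℙ K W) :=
  @Quotient.fintype {w : W // w ≠ 0}
    (@Subtype.fintype _ _ (fun _ => Classical.propDecidable _) _)
    (projectivizationSetoid K W) (Classical.decRel _)

lemma card_projectivization_mul (r : ℕ) :
    Fintype.card (ℙ F (Fin r → F)) * (Fintype.card F - 1) = Fintype.card F ^ r - 1 := by
  classical
  have key := Finset.card_eq_sum_card_fiberwise
    (s := (Finset.univ : Finset {v : Fin r → F // v ≠ 0}))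
    (t := (Finset.univ : Finset (ℙ F (Fin r → F))))
    (f := fun v => Projectivization.mk F v.1 v.2)
    (fun _ _ => Finset.mem_univ _)
  have hfiber : ∀ p : ℙ F (Fin r → F),
      ((Finset.univ : Finset {v : Fin r → F // v ≠ 0}).filter
        (fun v => Projectivization.mk F v.1 v.2 = p)).card = Fintype.card F - 1 := by
    intro p
    have hb : (Finset.univ : Finset Fˣ).card
        = ((Finset.univ : Finset {v : Fin r → F // v ≠ 0}).filter
            (fun v => Projectivization.mk F v.1 v.2 = p)).card := Finset.card_bij
      (fun (t : Fˣ) (_ : t ∈ (Finset.univ : Finset Fˣ)) =>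
        (⟨(t : F) • p.rep, by
          simp [smul_ne_zero_iff, Units.ne_zero t, p.rep_nonzero]⟩ :
          {v : Fin r → F // v ≠ 0}))
      (fun t _ => by
        simp only [Finset.mem_filter, Finset.mem_univ, true_and]
        conv_rhs => rw [← p.mk_rep]
        rw [Projectivization.mk_eq_mk_iff]
        exact ⟨t, rfl⟩)
      (fun t _ t' _ h => by
        have h' : (t : F) • p.rep = (t' : F) • p.rep := congrArg Subtype.val h
        exact Units.ext (smul_left_injective F p.rep_nonzero h'))
      (fun v hv => by
        simp only [Finset.mem_filter, Finset.mem_univ, true_and] at hv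
        have hmk : Projectivization.mk F v.1 v.2 =
            Projectivization.mk F p.rep p.rep_nonzero := by rw [hv, p.mk_rep]
        rw [Projectivization.mk_eq_mk_iff] at hmk
        obtain ⟨a, ha⟩ := hmk
        exact ⟨a, Finset.mem_univ _, Subtype.ext (by simpa [Units.smul_def] using ha)⟩)
    rw [← hb, Finset.card_univ, Fintype.card_units]
  simp only [hfiber, Finset.sum_const, Finset.card_univ, smul_eq_mul] at key
  have hsub : Fintype.card {v : Fin r → F // v ≠ 0}
      = Fintype.card F ^ r - 1 := by
    rw [Fintype.card_subtype_compl (p := (· = (0 : Fin r → F)))]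
    rw [Fintype.card_subtype_eq, Fintype.card_fun, Fintype.card_fin]
  rw [hsub] at key
  exact key.symm

lemma exists_dominating_code (r n : ℕ) (hrn : r ≤ n)
    (hcard : Fintype.card (ℙ F (Fin r → F)) = n) :
    ∃ D : Finset (Fin n → F), IsDominatingSet (hammingGraph F n) D ∧
      D.card = Fintype.card F ^ (n - r) := by
  classical
  let e := (Fintype.equivFinOfCardEq hcard).symm
  let c : Fin n → (Fin r → F) := fun i => (e i).rep
  have hc0 : ∀ i, c i ≠ 0 := fun i => (e i).rep_nonzero
  have hcover : ∀ s : Fin r → F, s ≠ 0 → ∃ i : Fin n, ∃ t : F, t • c i = s := by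
    intro s hs
    refine ⟨e.symm (Projectivization.mk F s hs), ?_⟩
    have hmk : Projectivization.mk F s hs
        = Projectivization.mk F (c (e.symm (Projectivization.mk F s hs)))
            (hc0 (e.symm (Projectivization.mk F s hs))) := by
      show _ = Projectivization.mk F (e (e.symm (Projectivization.mk F s hs))).rep _
      rw [Projectivization.mk_rep, Equiv.apply_symm_apply]
    rw [Projectivization.mk_eq_mk_iff'] at hmk
    obtain ⟨a, ha⟩ := hmk
    exact ⟨a, ha⟩
  let φ : (Fin n → F) →ₗ[F] (Fin r → F) :=
    ∑ i : Fin n, LinearMap.smulRight (LinearMap.proj i) (c i)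
  have hφ : ∀ x, φ x = ∑ i, x i • c i := by
    intro x
    simp [φ, LinearMap.sum_apply]
  have hsingle : ∀ (i : Fin n) (t : F), φ (Pi.single i t) = t • c i := by
    intro i t
    rw [hφ, Finset.sum_eq_single i]
    · simp
    · intro j _ hj
      rw [Pi.single_eq_of_ne hj, zero_smul]
    · intro h; exact absurd (Finset.mem_univ i) h
  have hsurj : Function.Surjective φ := by
    intro s
    by_cases hs : s = 0
    · exact ⟨0, by simp [hφ, hs]⟩
    · obtain ⟨i, t, ht⟩ := hcover s hs
      exact ⟨Pi.single i t, by rw [hsingle, ht]⟩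
  have hker : Fintype.card (LinearMap.ker φ) = Fintype.card F ^ (n - r) := by
    rw [Module.card_eq_pow_finrank (K := F)]
    congr 1
    have h1 := LinearMap.finrank_range_add_finrank_ker φ
    rw [LinearMap.range_eq_top.mpr hsurj, finrank_top, Module.finrank_fin_fun,
      Module.finrank_fin_fun] at h1
    omega
  refine ⟨Finset.univ.filter (fun x => φ x = 0), ?_, ?_⟩
  · intro y
    by_cases hy : φ y = 0
    · exact ⟨y, by simp [hy], by rw [mem_closedNbhd_hamming]; left; rfl⟩
    · obtain ⟨i, t, ht⟩ := hcover (φ y) hy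
      have htne : t ≠ 0 := by
        rintro rfl
        rw [zero_smul] at ht
        exact hy ht.symm
      refine ⟨Function.update y i (y i - t), ?_, ?_⟩
      · simp only [Finset.mem_filter, Finset.mem_univ, true_and]
        have hu : Function.update y i (y i - t) = y - Pi.single i t := by
          funext j
          by_cases hj : j = i
          · subst hj; simp
          · simp [Function.update_apply, hj, Pi.single_eq_of_ne hj]
        rw [hu, map_sub, hsingle, ht, sub_self]
      · rw [mem_closedNbhd_hamming]
        right
        rw [hammingDist_comm]
        apply hamming_update_dist
        intro h
        exact htne (by simpa using sub_eq_self.mp h)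
  · rw [← hker, ← Fintype.card_subtype (fun x : Fin n → F => φ x = 0)]
    exact Fintype.card_congr (Equiv.subtypeEquivRight
      (fun x : Fin n → F => (LinearMap.mem_ker (f := φ)).symm))

lemma aux_pow_ge (q r : ℕ) (hq : 2 ≤ q) : r * (q - 1) + 1 ≤ q ^ r := by
  induction r with
  | zero => simp
  | succ r ih =>
    have h1 : 1 ≤ q ^ r := Nat.one_le_pow _ _ (by omega)
    have h2 : q - 1 ≤ q ^ r * (q - 1) := Nat.le_mul_of_pos_left _ (by omega)
    have h3 : q ^ (r + 1) = q ^ r + q ^ r * (q - 1) := by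
      have : q ^ r * q = q ^ r * (1 + (q - 1)) := by congr 1; omega
      rw [pow_succ, this, Nat.mul_add, Nat.mul_one]
    have h4 : (r + 1) * (q - 1) = r * (q - 1) + (q - 1) := by ring
    omega

end HammingDomination

/-- For n = (q^r - 1)/(q - 1) with r ≥ 2, the domination number of the Hamming
graph on F^n with |F| = q is q^(n - r). -/
theorem hammingGraph_dominationNumber (F : Type*) [Field F] [Fintype F] [DecidableEq F]
    (r : ℕ) (hr : 2 ≤ r) (n : ℕ)
    (hn : n = (Fintype.card F ^ r - 1) / (Fintype.card F - 1)) :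
    dominationNumber (hammingGraph F n) = Fintype.card F ^ (n - r) := by
  classical
  set q := Fintype.card F with hq
  have hq2 : 2 ≤ q := Fintype.one_lt_card
  have hdvd : (q - 1) ∣ (q ^ r - 1) := by
    simpa using Nat.sub_dvd_pow_sub_pow q 1 r
  have hmul : n * (q - 1) = q ^ r - 1 := by
    rw [hn]; exact Nat.div_mul_cancel hdvd
  have hqr1 : 1 ≤ q ^ r := Nat.one_le_pow _ _ (by omega)
  have hNsize : 1 + n * (q - 1) = q ^ r := by omega
  have hrn : r ≤ n := by
    have h1 := aux_pow_ge q r hq2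
    have h2 : r * (q - 1) ≤ n * (q - 1) := by omega
    exact Nat.le_of_mul_le_mul_right h2 (by omega)
  have hproj : Fintype.card (Projectivization F (Fin r → F)) = n := by
    have h1 := card_projectivization_mul (F := F) r
    have h2 : Fintype.card (Projectivization F (Fin r → F)) * (q - 1) = n * (q - 1) := by
      rw [h1, hmul]
    exact Nat.eq_of_mul_eq_mul_right (by omega) h2
  obtain ⟨D, hDdom, hDcard⟩ := exists_dominating_code (F := F) r n hrn hproj
  have hlow : ∀ m ∈ {k : ℕ | ∃ D : Finset (Fin n → F),
      IsDominatingSet (hammingGraph F n) D ∧ D.card = k},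
      Fintype.card F ^ (n - r) ≤ m := by
    rintro m ⟨D', hD', rfl⟩
    have hsub : (Finset.univ : Finset (Fin n → F)) ⊆
        D'.biUnion (closedNbhd (hammingGraph F n)) := by
      intro v _
      obtain ⟨u, hu, hvu⟩ := hD' v
      exact Finset.mem_biUnion.mpr ⟨u, hu, hvu⟩
    have hcount : q ^ n ≤ D'.card * q ^ r := by
      calc q ^ n = (Finset.univ : Finset (Fin n → F)).card := by
            rw [Finset.card_univ, Fintype.card_fun, Fintype.card_fin]
        _ ≤ (D'.biUnion (closedNbhd (hammingGraph F n))).card := Finset.card_le_card hsub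
        _ ≤ ∑ u ∈ D', (closedNbhd (hammingGraph F n) u).card := Finset.card_biUnion_le
        _ = D'.card * q ^ r := by
            simp only [card_closedNbhd_hamming, ← hq, hNsize]
            rw [Finset.sum_const, smul_eq_mul]
    have hpow : q ^ n = q ^ (n - r) * q ^ r := by
      rw [← pow_add, Nat.sub_add_cancel hrn]
    rw [hpow] at hcount
    exact Nat.le_of_mul_le_mul_right hcount (by positivity)
  apply le_antisymm
  · exact Nat.sInf_le ⟨D, hDdom, hDcard⟩
  · have hne : {k : ℕ | ∃ D : Finset (Fin n → F),
        IsDominatingSet (hammingGraph F n) D ∧ D.card = k}.Nonempty :=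
      ⟨_, D, hDdom, rfl⟩
    exact hlow _ (Nat.sInf_mem hne)
end
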